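/- For every integer n ≥ 3, there exists a partition of [3n] into three n-element sets A, B, C such that W(A,B) = W(B,C) = W(C,A) > n²/2, i.e., a balanced non-transitive set of n-sided dice exists for all n ≥ 3. -/
import Mathlib


/-- Number of winning pairs: pairs (x,y) with x from X, y from Y, and x > y. -/
def W (X Y : Finset ℕ) : ℕ := ((X ×ˢ Y).filter (fun p => p.2 < p.1)).card

/-- A set of n-sided dice: a partition of [3n] into three n-element sets. -/
def IsDice (n : ℕ) (A B C : Finset ℕ) : Prop :=
  A ∪ B ∪ C = Finset.Icc 1 (3 * n) ∧
  A.card = n ∧ B.card = n ∧ C.card = n ∧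
  Disjoint A B ∧ Disjoint A C ∧ Disjoint B C

lemma W_sum (X Y : Finset ℕ) :
    W X Y = ∑ x ∈ X, ∑ y ∈ Y, if y < x then 1 else 0 := by
  unfold W
  rw [Finset.card_filter, Finset.sum_product]

lemma W_union_left (X X' Y : Finset ℕ) (h : Disjoint X X') :
    W (X ∪ X') Y = W X Y + W X' Y := by
  simp [W_sum, Finset.sum_union h]

lemma W_union_right (X Y Y' : Finset ℕ) (h : Disjoint Y Y') :
    W X (Y ∪ Y') = W X Y + W X Y' := by
  simp [W_sum, Finset.sum_union h, Finset.sum_add_distrib]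

lemma W_all_gt (X Y : Finset ℕ) (h : ∀ x ∈ X, ∀ y ∈ Y, y < x) :
    W X Y = X.card * Y.card := by
  unfold W
  rw [Finset.filter_true_of_mem, Finset.card_product]
  intro p hp
  rw [Finset.mem_product] at hp
  exact h p.1 hp.1 p.2 hp.2

lemma W_all_le (X Y : Finset ℕ) (h : ∀ x ∈ X, ∀ y ∈ Y, ¬ y < x) :
    W X Y = 0 := by
  unfold W
  rw [Finset.filter_false_of_mem, Finset.card_empty]
  intro p hp
  rw [Finset.mem_product] at hp
  exact h p.1 hp.1 p.2 hp.2

lemma W_shift (X Y : Finset ℕ) (d : ℕ) :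
    W (X.image (· + d)) (Y.image (· + d)) = W X Y := by
  have hinj : Function.Injective (· + d) := add_left_injective d
  rw [W_sum, W_sum, Finset.sum_image (fun a _ b _ h => hinj h)]
  refine Finset.sum_congr rfl fun x hx => ?_
  rw [Finset.sum_image (fun a _ b _ h => hinj h)]
  simp

/-- The key concatenation step: from a balanced non-transitive set of `m`-sided dice
we get one for `m + 3` by adjoining the shifted 3-sided example. -/
lemma step (m : ℕ) (A B C : Finset ℕ) (h : IsDice m A B C)
    (h1 : W A B = W B C) (h2 : W B C = W C A) (h3 : 2 * W A B > m ^ 2) :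
    ∃ A' B' C' : Finset ℕ, IsDice (m + 3) A' B' C' ∧
      W A' B' = W B' C' ∧ W B' C' = W C' A' ∧ 2 * W A' B' > (m + 3) ^ 2 := by
  obtain ⟨hu, hcA, hcB, hcC, hAB, hAC, hBC⟩ := h
  set d := 3 * m with hd
  have hinj : Function.Injective (· + d) := add_left_injective d
  set A3 : Finset ℕ := {1, 5, 9} with hA3
  set B3 : Finset ℕ := {3, 4, 8} with hB3
  set C3 : Finset ℕ := {2, 6, 7} with hC3
  set SA := A3.image (· + d) with hSA
  set SB := B3.image (· + d) with hSB
  set SC := C3.image (· + d) with hSC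
  -- bounds on old elements
  have hbound : ∀ x ∈ A ∪ B ∪ C, 1 ≤ x ∧ x ≤ d := by
    intro x hx
    rw [hu, Finset.mem_Icc] at hx
    exact hx
  have hboundA : ∀ x ∈ A, x ≤ d := fun x hx =>
    (hbound x (by simp [hx])).2
  have hboundB : ∀ x ∈ B, x ≤ d := fun x hx =>
    (hbound x (by simp [hx])).2
  have hboundC : ∀ x ∈ C, x ≤ d := fun x hx =>
    (hbound x (by simp [hx])).2
  -- bounds on shifted elements
  have hlow : ∀ X3 : Finset ℕ, X3 ⊆ Finset.Icc 1 9 →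
      ∀ x ∈ X3.image (· + d), d + 1 ≤ x ∧ x ≤ d + 9 := by
    intro X3 hsub x hx
    rw [Finset.mem_image] at hx
    obtain ⟨a, ha, rfl⟩ := hx
    have := Finset.mem_Icc.mp (hsub ha)
    omega
  have hsubA3 : A3 ⊆ Finset.Icc 1 9 := by decide
  have hsubB3 : B3 ⊆ Finset.Icc 1 9 := by decide
  have hsubC3 : C3 ⊆ Finset.Icc 1 9 := by decide
  have hlowA := hlow A3 hsubA3
  have hlowB := hlow B3 hsubB3
  have hlowC := hlow C3 hsubC3
  -- disjointness between old and shifted sets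
  have hdisj : ∀ X S : Finset ℕ, (∀ x ∈ X, x ≤ d) → (∀ x ∈ S, d + 1 ≤ x ∧ x ≤ d + 9) →
      Disjoint X S := by
    intro X S hX hS
    rw [Finset.disjoint_left]
    intro a haX haS
    have := hX a haX
    have := hS a haS
    omega
  have dA_SA := hdisj A SA hboundA hlowA
  have dA_SB := hdisj A SB hboundA hlowB
  have dA_SC := hdisj A SC hboundA hlowC
  have dB_SA := hdisj B SA hboundB hlowA
  have dB_SB := hdisj B SB hboundB hlowB
  have dB_SC := hdisj B SC hboundB hlowC
  have dC_SA := hdisj C SA hboundC hlowA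
  have dC_SB := hdisj C SB hboundC hlowB
  have dC_SC := hdisj C SC hboundC hlowC
  have dSASB : Disjoint SA SB := by
    rw [hSA, hSB, Finset.disjoint_image hinj]; decide
  have dSASC : Disjoint SA SC := by
    rw [hSA, hSC, Finset.disjoint_image hinj]; decide
  have dSBSC : Disjoint SB SC := by
    rw [hSB, hSC, Finset.disjoint_image hinj]; decide
  -- cardinalities of shifted sets
  have hcSA : SA.card = 3 := by
    rw [hSA, Finset.card_image_of_injective _ hinj]; decide
  have hcSB : SB.card = 3 := by
    rw [hSB, Finset.card_image_of_injective _ hinj]; decide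
  have hcSC : SC.card = 3 := by
    rw [hSC, Finset.card_image_of_injective _ hinj]; decide
  -- W between old and shifted pieces
  have Wzero : ∀ X S : Finset ℕ, (∀ x ∈ X, x ≤ d) → (∀ x ∈ S, d + 1 ≤ x ∧ x ≤ d + 9) →
      W X S = 0 := by
    intro X S hX hS
    apply W_all_le
    intro x hx y hy
    have := hX x hx
    have := hS y hy
    omega
  have Wfull : ∀ S X : Finset ℕ, (∀ x ∈ X, x ≤ d) → (∀ x ∈ S, d + 1 ≤ x ∧ x ≤ d + 9) →
      W S X = S.card * X.card := by
    intro S X hX hS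
    apply W_all_gt
    intro x hx y hy
    have := hX y hy
    have := hS x hx
    omega
  -- W values of the shifted base dice
  have WSAB : W SA SB = 5 := by rw [hSA, hSB, W_shift]; decide
  have WSBC : W SB SC = 5 := by rw [hSB, hSC, W_shift]; decide
  have WSCA : W SC SA = 5 := by rw [hSC, hSA, W_shift]; decide
  -- the new dice
  refine ⟨A ∪ SA, B ∪ SB, C ∪ SC, ⟨?_, ?_, ?_, ?_, ?_, ?_, ?_⟩, ?_, ?_, ?_⟩
  · -- union
    have himg : SA ∪ SB ∪ SC = Finset.Icc (d + 1) (d + 9) := by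
      rw [hSA, hSB, hSC, ← Finset.image_union, ← Finset.image_union]
      have : A3 ∪ B3 ∪ C3 = Finset.Icc 1 9 := by decide
      rw [this, Finset.image_add_right_Icc]
      congr 1 <;> omega
    have : A ∪ SA ∪ (B ∪ SB) ∪ (C ∪ SC) = (A ∪ B ∪ C) ∪ (SA ∪ SB ∪ SC) := by
      ext x; simp [Finset.mem_union]; tauto
    rw [this, hu, himg]
    ext x
    simp only [Finset.mem_union, Finset.mem_Icc]
    omega
  · rw [Finset.card_union_of_disjoint dA_SA, hcA, hcSA]
  · rw [Finset.card_union_of_disjoint dB_SB, hcB, hcSB]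
  · rw [Finset.card_union_of_disjoint dC_SC, hcC, hcSC]
  · simp only [Finset.disjoint_union_left, Finset.disjoint_union_right]
    exact ⟨⟨hAB, dB_SA.symm⟩, dA_SB, dSASB⟩
  · simp only [Finset.disjoint_union_left, Finset.disjoint_union_right]
    exact ⟨⟨hAC, dC_SA.symm⟩, dA_SC, dSASC⟩
  · simp only [Finset.disjoint_union_left, Finset.disjoint_union_right]
    exact ⟨⟨hBC, dC_SB.symm⟩, dB_SC, dSBSC⟩
  · rw [W_union_left _ _ _ dA_SA, W_union_right _ _ _ dB_SB,
        W_union_right _ _ _ dB_SB, W_union_left _ _ _ dB_SB,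
        W_union_right _ _ _ dC_SC, W_union_right _ _ _ dC_SC,
        Wzero A SB hboundA hlowB, Wzero B SC hboundB hlowC,
        Wfull SA B hboundB hlowA, Wfull SB C hboundC hlowB,
        WSAB, WSBC, hcSA, hcSB, hcB, hcC]
    omega
  · rw [W_union_left _ _ _ dB_SB, W_union_right _ _ _ dC_SC,
        W_union_right _ _ _ dC_SC, W_union_left _ _ _ dC_SC,
        W_union_right _ _ _ dA_SA, W_union_right _ _ _ dA_SA,
        Wzero B SC hboundB hlowC, Wzero C SA hboundC hlowA,
        Wfull SB C hboundC hlowB, Wfull SC A hboundA hlowC,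
        WSBC, WSCA, hcSB, hcSC, hcC, hcA]
    omega
  · rw [W_union_left _ _ _ dA_SA, W_union_right _ _ _ dB_SB,
        W_union_right _ _ _ dB_SB,
        Wzero A SB hboundA hlowB, Wfull SA B hboundB hlowA,
        WSAB, hcSA, hcB]
    have hexp : (m + 3) ^ 2 = m ^ 2 + 6 * m + 9 := by ring
    rw [hexp]
    linarith only [h3]

set_option maxHeartbeats 2000000 in
theorem stmt6 (n : ℕ) (hn : 3 ≤ n) :
    ∃ A B C : Finset ℕ, IsDice n A B C ∧
      W A B = W B C ∧ W B C = W C A ∧ 2 * W A B > n ^ 2 := by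
  induction n using Nat.strong_induction_on with
  | _ n ih =>
    match n, hn with
    | 3, _ =>
      refine ⟨{1, 5, 9}, {3, 4, 8}, {2, 6, 7},
        ⟨?_, ?_, ?_, ?_, ?_, ?_, ?_⟩, ?_, ?_, ?_⟩ <;> decide
    | 4, _ =>
      refine ⟨{1, 3, 10, 12}, {2, 7, 8, 9}, {4, 5, 6, 11},
        ⟨?_, ?_, ?_, ?_, ?_, ?_, ?_⟩, ?_, ?_, ?_⟩ <;> decide
    | 5, _ =>
      refine ⟨{1, 2, 8, 14, 15}, {3, 5, 7, 12, 13}, {4, 6, 9, 10, 11},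
        ⟨?_, ?_, ?_, ?_, ?_, ?_, ?_⟩, ?_, ?_, ?_⟩ <;> decide
    | (m + 6), _ =>
      obtain ⟨A, B, C, hdice, h1, h2, h3⟩ :=
        ih (m + 3) (by omega) (by omega)
      have := step (m + 3) A B C hdice h1 h2 h3
      convert this using 3
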